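/- If $x$ and $a$ are real numbers with $0 \le x \le a \le 1$, then $e^{-x} \le 1 - (1 - 2a/3)x$. -/
import Mathlib

theorem exp_neg_le_one_sub_mul (x a : ℝ) (hx : 0 ≤ x) (hxa : x ≤ a) (ha : a ≤ 1) :
    Real.exp (-x) ≤ 1 - (1 - 2 * a / 3) * x := by
  have h1 : 1 + x + x ^ 2 / 2 ≤ Real.exp x := by
    have := Real.quadratic_le_exp_of_nonneg hx
    nlinarith
  have h2 : Real.exp (-x) = (Real.exp x)⁻¹ := Real.exp_neg x
  have hpos : (0:ℝ) < 1 + x + x ^ 2 / 2 := by positivity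
  have h3 : Real.exp (-x) ≤ (1 + x + x ^ 2 / 2)⁻¹ := by
    rw [h2]
    exact inv_anti₀ hpos h1
  have h4 : (1 + x + x ^ 2 / 2)⁻¹ ≤ 1 - (1 - 2 * a / 3) * x := by
    rw [inv_le_iff_one_le_mul₀ hpos]
    have k1 : x * x ≤ a * x := mul_le_mul_of_nonneg_right hxa hx
    have k2 : x * (x * x) ≤ a * (x * x) := by nlinarith
    nlinarith [mul_nonneg hx hx, mul_nonneg (mul_nonneg hx hx) hx]
  linarith
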